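/- arXiv:1709.08900 — 7 statements merged into one kernel-verified Lean document; each statement's English description precedes it below -/
import Mathlib

section
/- For every folklore state s over Fin N with values in a type V, every index i : Fin N and every value v : V, the abstraction of the state iwrite(s, i, v) equals Function.update (abs s) i v. (In words: the folklore algorithm's write operation implements writing one element of the abstract array, in both the chained and unchained cases.) -/
/-- A state of the folklore initializable-array algorithm. -/
structure FolkloreState (N : ℕ) (V : Type*) where
  Varr : Fin N → V
  F : Fin N → ℕ
  T : ℕ → Fin N
  b : ℕ
  initv : V

namespace FolkloreState

variable {N : ℕ} {V : Type*}

/-- Index `i` is chained: `F i` points below the stack pointer and `T (F i)` points back. -/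
def Chained (s : FolkloreState N V) (i : Fin N) : Prop :=
  s.F i < s.b ∧ s.T (s.F i) = i

instance (s : FolkloreState N V) (i : Fin N) : Decidable (s.Chained i) := by
  unfold Chained; infer_instance

/-- The abstract array represented by a folklore state. -/
def abs (s : FolkloreState N V) : Fin N → V :=
  fun i => if s.Chained i then s.Varr i else s.initv

/-- The folklore write operation. -/
def iwrite (s : FolkloreState N V) (i : Fin N) (v : V) : FolkloreState N V :=
  if s.Chained i then
    { s with Varr := Function.update s.Varr i v }
  else
    { s with
      Varr := Function.update s.Varr i v
      T := Function.update s.T s.b i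
      F := Function.update s.F i s.b
      b := s.b + 1 }

end FolkloreState


namespace FolkloreState

variable {N : ℕ} {V : Type*} (s : FolkloreState N V) (v : V)

@[simp]
theorem iwrite_Varr (i : Fin N) : (s.iwrite i v).Varr = Function.update s.Varr i v := by
  unfold iwrite; split_ifs <;> rfl

@[simp]
theorem iwrite_initv (i : Fin N) : (s.iwrite i v).initv = s.initv := by
  unfold iwrite; split_ifs <;> rfl

theorem chained_iwrite_self (i : Fin N) : (s.iwrite i v).Chained i := by
  unfold iwrite
  split_ifs with hc
  · exact hc
  · simp [Chained]

theorem chained_iwrite_iff_of_ne {i j : Fin N} (hji : j ≠ i) :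
    (s.iwrite i v).Chained j ↔ s.Chained j := by
  unfold iwrite
  split_ifs with hc
  · rfl
  · simp only [Chained, Function.update_of_ne hji]
    -- the new top slot `b` points to `i ≠ j`, so it cannot be the one chaining `j`
    by_cases hb : s.F j = s.b
    · simp [hb, Function.update_self, Ne.symm hji]
    · rw [Function.update_of_ne hb]
      omega

end FolkloreState

/-- The folklore algorithm's write operation implements writing one element of the
abstract array, in both the chained and unchained cases. -/
theorem folklore_iwrite_correct {N : ℕ} {V : Type*} (s : FolkloreState N V)
    (i : Fin N) (v : V) :
    (s.iwrite i v).abs = Function.update s.abs i v := by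
  funext j
  rcases eq_or_ne j i with rfl | hji
  · simp [FolkloreState.abs, s.chained_iwrite_self]
  · simp [FolkloreState.abs, s.chained_iwrite_iff_of_ne v hji, hji]
end

section
/- For every folklore state s₀ over Fin N with values in a type V and every finite list ops of operations, the abstraction of the state obtained by applying the folklore implementation of each operation in ops in order starting from s₀ equals the function obtained by applying the specification semantics of each operation in ops in order starting from abs s₀. (In words: the folklore algorithm correctly simulates an initializable array under any sequence of init and write operations.) -/
namespace FolkloreState

/-- The folklore init operation: reset the stack pointer and record a new initial value. -/
def iinit {N : ℕ} {V : Type*} (s : FolkloreState N V) (v : V) : FolkloreState N V :=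
  { s with b := 0, initv := v }

end FolkloreState

/-- An operation on an initializable array of length `N` with values in `V`:
either initialize all elements to a value, or write a value at an index. -/
inductive ArrayOp (N : ℕ) (V : Type*) where
  | init : V → ArrayOp N V
  | write : Fin N → V → ArrayOp N V

/-- Specification semantics of one operation acting on an abstract array. -/
def specStep {N : ℕ} {V : Type*} (f : Fin N → V) : ArrayOp N V → Fin N → V
  | .init v => fun _ => v
  | .write i v => Function.update f i v

/-- The folklore implementation of one operation acting on a folklore state. -/
def implStep {N : ℕ} {V : Type*} (s : FolkloreState N V) : ArrayOp N V → FolkloreState N V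
  | .init v => s.iinit v
  | .write i v => s.iwrite i v


theorem abs_step {N : ℕ} {V : Type*} (s : FolkloreState N V) (op : ArrayOp N V) :
    (implStep s op).abs = specStep s.abs op := by
  cases op with
  | init v =>
    funext j
    simp [implStep, specStep, FolkloreState.iinit, FolkloreState.abs, FolkloreState.Chained]
  | write i v =>
    funext j
    simp only [implStep, specStep, FolkloreState.iwrite]
    by_cases hc : s.Chained i
    · simp only [if_pos hc, FolkloreState.abs]
      by_cases hji : j = i
      · subst hji
        simp only [FolkloreState.Chained, Function.update_self]
        rw [if_pos ⟨hc.1, hc.2⟩]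
      · simp [FolkloreState.abs, FolkloreState.Chained, Function.update_of_ne hji]
    · simp only [if_neg hc, FolkloreState.abs]
      by_cases hji : j = i
      · subst hji
        have hch : ((({ s with
            Varr := Function.update s.Varr j v
            T := Function.update s.T s.b j
            F := Function.update s.F j s.b
            b := s.b + 1 } : FolkloreState N V)).Chained j) := by
          refine ⟨?_, ?_⟩
          · show Function.update s.F j s.b j < s.b + 1
            rw [Function.update_self j s.b s.F]
            exact Nat.lt_succ_self _
          · show Function.update s.T s.b j (Function.update s.F j s.b j) = j
            simp [Function.update_apply]
        simp [hch, Function.update_self]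
      · have key : ((({ s with
            Varr := Function.update s.Varr i v
            T := Function.update s.T s.b i
            F := Function.update s.F i s.b
            b := s.b + 1 } : FolkloreState N V)).Chained j) ↔ s.Chained j := by
          simp only [FolkloreState.Chained]
          rw [Function.update_of_ne hji s.b s.F]
          constructor
          · rintro ⟨h1, h2⟩
            rcases Nat.lt_succ_iff_lt_or_eq.mp h1 with h | h
            · refine ⟨h, ?_⟩
              rwa [Function.update_of_ne (Nat.ne_of_lt h)] at h2
            · exfalso
              rw [h, Function.update_self] at h2
              exact hji h2.symm
          · rintro ⟨h1, h2⟩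
            exact ⟨Nat.lt_succ_of_lt h1, by rwa [Function.update_of_ne (Nat.ne_of_lt h1)]⟩
        simp only [key, Function.update_of_ne hji]
        rfl

/-- The folklore algorithm correctly simulates an initializable array under any
sequence of init and write operations. -/
theorem folklore_simulates {N : ℕ} {V : Type*} (s₀ : FolkloreState N V)
    (ops : List (ArrayOp N V)) :
    (ops.foldl implStep s₀).abs = ops.foldl specStep s₀.abs := by
  induction ops generalizing s₀ with
  | nil => rfl
  | cons op rest ih => simp [List.foldl_cons, ih, abs_step]
end

section
/- Let ℓ ≥ 1, k be natural numbers and v < 2^ℓ. Then for every m < k·ℓ, Nat.testBit (v * ∑_{c ∈ Finset.range k} 2^(c·ℓ)) m = Nat.testBit v (m % ℓ). (In words: multiplying an ℓ-bit value v by the constant whose binary representation has a 1 exactly at the bit positions c·ℓ for 0 ≤ c < k produces the number whose binary representation consists of k consecutive copies of the ℓ-bit representation of v; this shows the bit-repeat operation can be implemented by a single multiplication.) -/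
lemma bitRepeat_aux (ℓ v : ℕ) (hv : v < 2 ^ ℓ) :
    ∀ k, (∑ c ∈ Finset.range k, v * 2 ^ (c * ℓ)) < 2 ^ (k * ℓ) ∧
      ∀ m < k * ℓ, Nat.testBit (∑ c ∈ Finset.range k, v * 2 ^ (c * ℓ)) m
        = Nat.testBit v (m % ℓ) := by
  intro k
  induction k with
  | zero => simp
  | succ k ih =>
    obtain ⟨ihlt, ihbit⟩ := ih
    have hsum : (∑ c ∈ Finset.range (k + 1), v * 2 ^ (c * ℓ))
        = 2 ^ (k * ℓ) * v + ∑ c ∈ Finset.range k, v * 2 ^ (c * ℓ) := by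
      rw [Finset.sum_range_succ]; ring
    constructor
    · rw [hsum]
      calc 2 ^ (k * ℓ) * v + ∑ c ∈ Finset.range k, v * 2 ^ (c * ℓ)
          < 2 ^ (k * ℓ) * v + 2 ^ (k * ℓ) := by omega
        _ = (v + 1) * 2 ^ (k * ℓ) := by ring
        _ ≤ 2 ^ ℓ * 2 ^ (k * ℓ) := Nat.mul_le_mul_right _ hv
        _ = 2 ^ ((k + 1) * ℓ) := by rw [← pow_add]; ring_nf
    · intro m hm
      rw [hsum, Nat.testBit_two_pow_mul_add _ ihlt]
      by_cases h : m < k * ℓ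
      · rw [if_pos h]; exact ihbit m h
      · rw [if_neg h]
        have hm' := hm
        rw [add_mul, one_mul] at hm'
        have hr : m - k * ℓ < ℓ := by omega
        have hme : m = (m - k * ℓ) + k * ℓ := by omega
        rw [hme, Nat.add_mul_mod_self_right, Nat.mod_eq_of_lt hr]
        congr 1
        omega

/-- Multiplying an `ℓ`-bit value `v` by the constant whose binary representation has a `1`
exactly at the bit positions `c·ℓ` for `0 ≤ c < k` produces the number whose binary
representation consists of `k` consecutive copies of the `ℓ`-bit representation of `v`:
the bit-repeat operation can be implemented by a single multiplication. -/
theorem bitRepeat_by_mul_testBit (ℓ k v : ℕ) (hℓ : 1 ≤ ℓ) (hv : v < 2 ^ ℓ)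
    (m : ℕ) (hm : m < k * ℓ) :
    Nat.testBit (v * ∑ c ∈ Finset.range k, 2 ^ (c * ℓ)) m = Nat.testBit v (m % ℓ) := by
  rw [Finset.mul_sum]
  exact (bitRepeat_aux ℓ v hv k).2 m hm
end

section
/- Let ℓ ≥ 1, k be natural numbers and v < 2^ℓ. Then for every j < k, ((v * ∑_{c ∈ Finset.range k} 2^(c·ℓ)) / 2^(j·ℓ)) % 2^ℓ = v. (In words: every length-ℓ digit block of the product of v with the bit-pattern ∑_{c<k} 2^{cℓ} equals v, so each of the k packed fields of the repeated word can be read back exactly.) -/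
open Finset

/-- Since `∑_{c<k+1} B^c = B * ∑_{c<k} B^c + 1`, the lowest base-`B` digit of the product is `v`
and dropping it leaves the same product with one repetition fewer. -/
theorem Nat.mul_geom_sum_div_pow_mod {B v : ℕ} (hv : v < B) :
    ∀ {k j : ℕ}, j < k → (v * ∑ c ∈ range k, B ^ c) / B ^ j % B = v
  | k + 1, 0, _ => by
    rw [geom_sum_succ, pow_zero, Nat.div_one, mul_add_one, mul_left_comm,
      Nat.mul_add_mod_self_left, Nat.mod_eq_of_lt hv]
  | k + 1, j + 1, hj => by
    have hB : 0 < B := by omega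
    have hdrop : (v * ∑ c ∈ range (k + 1), B ^ c) / B = v * ∑ c ∈ range k, B ^ c := by
      rw [geom_sum_succ, mul_add_one, mul_left_comm, add_comm, Nat.add_mul_div_left _ _ hB,
        Nat.div_eq_of_lt hv, zero_add]
    rw [pow_succ', ← Nat.div_div_eq_div_mul, hdrop]
    exact Nat.mul_geom_sum_div_pow_mod hv (by omega)

theorem bitRepeat_by_mul_extract_general (ℓ k v : ℕ) (hv : v < 2 ^ ℓ)
    (j : ℕ) (hj : j < k) :
    ((v * ∑ c ∈ Finset.range k, 2 ^ (c * ℓ)) / 2 ^ (j * ℓ)) % 2 ^ ℓ = v := by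
  simp only [mul_comm _ ℓ, pow_mul]
  exact Nat.mul_geom_sum_div_pow_mod hv hj

/-- Every length-`ℓ` digit block of the product of `v` with the bit pattern
`∑_{c < k} 2^(c·ℓ)` equals `v`: each of the `k` packed fields of the repeated
word can be read back exactly. -/
theorem bitRepeat_by_mul_extract (ℓ k v : ℕ) (hℓ : 1 ≤ ℓ) (hv : v < 2 ^ ℓ)
    (j : ℕ) (hj : j < k) :
    ((v * ∑ c ∈ Finset.range k, 2 ^ (c * ℓ)) / 2 ^ (j * ℓ)) % 2 ^ ℓ = v :=
  bitRepeat_by_mul_extract_general ℓ k v hv j hj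
end

section
/- For every well-formed in-place state s (N even, N ≥ 2, ℓ ≥ Nat.clog 2 N, all entries of A and initv strictly less than 2^ℓ, 2·b ≤ N), every position i : Fin N and every value v < 2^ℓ, the state s' = iwrite(s, i, v) is again well-formed and Zabs s' = Function.update (Zabs s) i v. (This is the core invariant-maintenance claim of the in-place algorithm using 2ℓ extra bits: the write operation of Algorithm 3 implements writing one element of the abstract array.) -/
/-- A state of the in-place initializable-array algorithm: the single backing array `A`
of length `N`, a stack pointer `b`, and an initial value `initv`. -/
structure IPState (N : ℕ) where
  A : Fin N → ℕ
  b : ℕ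
  initv : ℕ

namespace IPState

variable {N : ℕ}

/-- Read the backing array at a natural-number position (out-of-range reads return `0`;
all positions actually used by the algorithm are in range). -/
def get (s : IPState N) (x : ℕ) : ℕ :=
  if h : x < N then s.A ⟨x, h⟩ else 0

/-- Write value `v` at natural-number position `x` of the backing array. -/
def set (s : IPState N) (x v : ℕ) : IPState N :=
  { s with A := fun y => if (y : ℕ) = x then v else s.A y }

/-- `chainWith s i` returns `some k` if block `B_i` is chained with block `B_k`
(i.e. `A[2i] = 2k`, `A[2k] = 2i`, the two blocks lie on opposite sides of the
stack pointer `b`, and both block indices are valid), and `none` otherwise. -/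
def chainWith (s : IPState N) (i : ℕ) : Option ℕ :=
  let k' := s.get (2 * i)
  let k := k' / 2
  if k' % 2 = 0 ∧ s.get k' = 2 * i ∧
      (i < s.b ∧ s.b ≤ k ∨ k < s.b ∧ s.b ≤ i) ∧
      2 * i + 1 < N ∧ 2 * k + 1 < N then
    some k
  else
    none

/-- `makeChain s i j` chains block `B_i` with block `B_j`: `A[2i] ← 2j`, `A[2j] ← 2i`. -/
def makeChain (s : IPState N) (i j : ℕ) : IPState N :=
  (s.set (2 * i) (2 * j)).set (2 * j) (2 * i)

/-- `breakChain s i` breaks the chain of block `B_i` (if any) by rewriting `A[2k] ← 2k`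
for the partner block `B_k`. -/
def breakChain (s : IPState N) (i : ℕ) : IPState N :=
  match s.chainWith i with
  | some k => s.set (2 * k) (2 * k)
  | none => s

/-- `initBlock s i` initializes block `B_i` with the initial value:
`A[2i] ← initv`, `A[2i+1] ← initv`. -/
def initBlock (s : IPState N) (i : ℕ) : IPState N :=
  (s.set (2 * i) s.initv).set (2 * i + 1) s.initv

/-- `extend` extends the written area by one block and returns (the new state and the
index of) a block initialized with `(initv, initv)` lying in the written area. -/
def extend (s : IPState N) : IPState N × ℕ :=
  match s.chainWith s.b with
  | none =>
      let s1 : IPState N := { s with b := s.b + 1 }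
      ((s1.initBlock s.b).breakChain s.b, s.b)
  | some k =>
      let s1 : IPState N := { s with b := s.b + 1 }
      -- overwrite block `B_{b-1}` with its abstract values, keeping `A[2(b-1)+1]`
      let s2 := s1.set (2 * s.b) (s1.get (2 * k + 1))
      let s3 := s2.breakChain s.b
      ((s3.initBlock k).breakChain k, k)

/-- The abstraction: the contents of the abstract initializable array represented by
the in-place state. -/
def Zabs (s : IPState N) (x : Fin N) : ℕ :=
  let i := (x : ℕ) / 2
  match s.chainWith i with
  | some k =>
      if i < s.b then s.initv
      else if (x : ℕ) % 2 = 0 then s.get (2 * k + 1) else s.A x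
  | none =>
      if i < s.b then s.A x else s.initv

/-- Step (W): write `v` at position `i` and break any accidental chain of its block. -/
def wstep (s : IPState N) (i : Fin N) (v : ℕ) : IPState N :=
  (s.set (i : ℕ) v).breakChain ((i : ℕ) / 2)

/-- Step (U): for a position `i` in a block chained with `B_k` in the unwritten area,
write `v` at the corresponding stored position. -/
def ustep (s : IPState N) (i : Fin N) (v k : ℕ) : IPState N :=
  if (i : ℕ) % 2 = 0 then s.set (2 * k + 1) v else s.set (i : ℕ) v

/-- The write operation of the in-place algorithm (Algorithm 3). -/
def iwrite (s : IPState N) (i : Fin N) (v : ℕ) : IPState N :=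
  let i' := (i : ℕ) / 2
  if i' < s.b then
    match s.chainWith i' with
    | none => s.wstep i v
    | some k =>
        let p := s.extend
        let s1 := p.1
        let j := p.2
        if j = i' then s1.wstep i v
        else
          -- exchange `B_{i'}` with `B_j`
          let s2 := (s1.set (2 * j) (s1.get (2 * i'))).set (2 * j + 1) (s1.get (2 * i' + 1))
          let s3 := s2.makeChain j k
          let s4 := s3.initBlock i'
          s4.wstep i v
  else
    match s.chainWith i' with
    | some k => s.ustep i v k
    | none =>
        let p := s.extend
        let s1 := p.1
        let k := p.2
        if k = i' then s1.wstep i v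
        else
          let s2 := s1.initBlock i'
          let s3 := s2.makeChain k i'
          s3.ustep i v k

/-- The read operation of the in-place algorithm (Algorithm 2). -/
def iread (s : IPState N) (i : Fin N) : ℕ :=
  let i' := (i : ℕ) / 2
  if (i : ℕ) < 2 * s.b then
    match s.chainWith i' with
    | some _ => s.initv
    | none => s.A i
  else
    match s.chainWith i' with
    | some _ => if (i : ℕ) % 2 = 0 then s.get (s.A i + 1) else s.A i
    | none => s.initv

/-- The init operation of the in-place algorithm: set `b ← 0` and `initv ← v`,
leaving `A` unchanged. -/
def iinit (s : IPState N) (v : ℕ) : IPState N :=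
  { s with b := 0, initv := v }

/-- Well-formedness of an in-place state with element size `ℓ`: all entries of `A`
and the initial value are `ℓ`-bit values, and the written area fits in the array. -/
def WF (ℓ : ℕ) (s : IPState N) : Prop :=
  (∀ x : Fin N, s.A x < 2 ^ ℓ) ∧ s.initv < 2 ^ ℓ ∧ 2 * s.b ≤ N

end IPState

/-!
The abstraction shows at position `x` either `initv` or the content of a single cell `source x`,
determined by the stack pointer and the chain relation `Chained`. Distinct positions have
distinct source cells, and no source cell is an even cell of the unwritten area. Each step of
`iwrite` is checked by tracking how it changes `Chained` and which cells it overwrites. Breaking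
the chain of a written block only rewrites an even cell of the unwritten area, so (W) and (U)
change the abstraction exactly at the written position. `extend` leaves the abstraction
unchanged and returns a written, unchained block holding `(initv, initv)`; moving the chain of
the target block onto that block, or chaining it with the target block when the latter is
unwritten, again leaves the abstraction unchanged, after which one (W) or (U) step does the write.
-/

namespace IPState

variable {N : ℕ} {s t : IPState N}

def Chained (s : IPState N) (c d : ℕ) : Prop :=
  s.get (2 * c) = 2 * d ∧ s.get (2 * d) = 2 * c ∧
    (c < s.b ∧ s.b ≤ d ∨ d < s.b ∧ s.b ≤ c) ∧ 2 * c + 1 < N ∧ 2 * d + 1 < N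

theorem chainWith_eq_some_iff {c d : ℕ} : s.chainWith c = some d ↔ s.Chained c d := by
  unfold chainWith Chained
  dsimp only
  split_ifs with h
  · refine ⟨?_, fun h' => ?_⟩
    · rintro ⟨⟩
      exact ⟨by omega, by rw [Nat.mul_div_cancel' (Nat.dvd_of_mod_eq_zero h.1)]; exact h.2.1,
        h.2.2.1, h.2.2.2⟩
    · rw [h'.1]; simp
  · simp only [false_iff]
    rintro ⟨h1, h2, h3⟩
    simp_all

theorem chainWith_eq_none_iff {c : ℕ} : s.chainWith c = none ↔ ∀ d, ¬ s.Chained c d := by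
  simp [Option.eq_none_iff_forall_ne_some, chainWith_eq_some_iff]

theorem chainWith_congr {c : ℕ} (h : ∀ d, t.Chained c d ↔ s.Chained c d) :
    t.chainWith c = s.chainWith c :=
  Option.ext fun d => by simp only [chainWith_eq_some_iff, h]

namespace Chained

variable {c d d' : ℕ}

theorem symm (h : s.Chained c d) : s.Chained d c := by
  obtain ⟨h1, h2, h3, h4, h5⟩ := h
  exact ⟨h2, h1, by omega, h5, h4⟩

theorem unique (h : s.Chained c d) (h' : s.Chained c d') : d = d' := by
  have := h.1.symm.trans h'.1
  omega

theorem lt_b_iff (h : s.Chained c d) : c < s.b ↔ s.b ≤ d := by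
  have := h.2.2.1
  omega

theorem ne (h : s.Chained c d) : c ≠ d := by
  have := h.2.2.1
  omega

end Chained

section Operations

variable {c d x y p w : ℕ}

@[simp] theorem set_b : (s.set p w).b = s.b := rfl
@[simp] theorem set_initv : (s.set p w).initv = s.initv := rfl

theorem get_set_of_ne (h : y ≠ p) : (s.set p w).get y = s.get y := by
  simp [get, set, h]

theorem get_set_self (h : p < N) : (s.set p w).get p = w := by
  simp [get, set, h]

theorem chained_set_iff (hc : p ≠ 2 * c) (hd : p ≠ 2 * d) :
    (s.set p w).Chained c d ↔ s.Chained c d := by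
  simp only [Chained, set_b, get_set_of_ne hc.symm, get_set_of_ne hd.symm]

theorem breakChain_of_unchained (h : ∀ d, ¬ s.Chained c d) : s.breakChain c = s := by
  rw [breakChain, chainWith_eq_none_iff.mpr h]

theorem breakChain_of_chained (h : s.Chained c d) : s.breakChain c = s.set (2 * d) (2 * d) := by
  rw [breakChain, chainWith_eq_some_iff.mpr h]

@[simp] theorem breakChain_b : (s.breakChain c).b = s.b := by
  unfold breakChain; split <;> rfl

@[simp] theorem breakChain_initv : (s.breakChain c).initv = s.initv := by
  unfold breakChain; split <;> rfl

theorem get_breakChain (hc : c < s.b) (hy : y / 2 < s.b ∨ y % 2 = 1) :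
    (s.breakChain c).get y = s.get y := by
  rcases h : s.chainWith c with _ | d
  · rw [breakChain, h]
  · have hd := (chainWith_eq_some_iff.mp h).lt_b_iff.mp hc
    rw [breakChain_of_chained (chainWith_eq_some_iff.mp h), get_set_of_ne (by omega)]

theorem chained_breakChain_iff :
    (s.breakChain c).Chained x d ↔ s.Chained x d ∧ x ≠ c ∧ d ≠ c := by
  by_cases h : ∃ m, s.Chained c m
  · obtain ⟨m, hm⟩ := h
    have hmN : 2 * m < N := by have := hm.2.2.2.2; omega
    rw [breakChain_of_chained hm]
    have hm_free : ∀ e, ¬ (s.set (2 * m) (2 * m)).Chained m e := fun e he =>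
      he.ne (by have := he.1; rw [get_set_self hmN] at this; omega)
    constructor
    · intro hxd
      have hxm : x ≠ m := by rintro rfl; exact hm_free d hxd
      have hdm : d ≠ m := by rintro rfl; exact hm_free x hxd.symm
      have hs := (chained_set_iff (by omega) (by omega)).mp hxd
      exact ⟨hs, by rintro rfl; exact hdm (hs.unique hm),
        by rintro rfl; exact hxm (hs.symm.unique hm)⟩
    · rintro ⟨hxd, hxc, hdc⟩
      have hxm : x ≠ m := by rintro rfl; exact hdc (hxd.unique hm.symm)
      have hdm : d ≠ m := by rintro rfl; exact hxc (hxd.symm.unique hm.symm)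
      exact (chained_set_iff (by omega) (by omega)).mpr hxd
  · push Not at h
    rw [breakChain_of_unchained h]
    exact ⟨fun hxd => ⟨hxd, fun e => h d (e ▸ hxd), fun e => h x (e ▸ hxd.symm)⟩,
      fun h => h.1⟩

@[simp] theorem initBlock_b : (s.initBlock c).b = s.b := rfl
@[simp] theorem initBlock_initv : (s.initBlock c).initv = s.initv := rfl

theorem get_initBlock_of_ne (hy : y / 2 ≠ c) : (s.initBlock c).get y = s.get y := by
  rw [initBlock, get_set_of_ne (by omega), get_set_of_ne (by omega)]

theorem get_initBlock (hc : 2 * c + 1 < N) (hy : y / 2 = c) : (s.initBlock c).get y = s.initv := by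
  rcases Nat.even_or_odd' y with ⟨z, rfl | rfl⟩
  · rw [initBlock, get_set_of_ne (by omega), show z = c by omega, get_set_self (by omega)]
  · rw [initBlock, show z = c by omega, get_set_self hc]

theorem chained_initBlock_iff (hx : x ≠ c) (hd : d ≠ c) :
    (s.initBlock c).Chained x d ↔ s.Chained x d := by
  rw [initBlock, chained_set_iff (by omega) (by omega), chained_set_iff (by omega) (by omega)]

@[simp] theorem makeChain_b : (s.makeChain c d).b = s.b := rfl
@[simp] theorem makeChain_initv : (s.makeChain c d).initv = s.initv := rfl

theorem get_makeChain_of_ne (hc : y ≠ 2 * c) (hd : y ≠ 2 * d) :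
    (s.makeChain c d).get y = s.get y := by
  rw [makeChain, get_set_of_ne hd, get_set_of_ne hc]

theorem chained_makeChain (hc : c < s.b) (hd : s.b ≤ d) (hcN : 2 * c + 1 < N)
    (hdN : 2 * d + 1 < N) : (s.makeChain c d).Chained c d := by
  refine ⟨?_, ?_, by simp [hc, hd], hcN, hdN⟩
  · rw [makeChain, get_set_of_ne (by omega), get_set_self (by omega)]
  · rw [makeChain, get_set_self (by omega)]

theorem chained_makeChain_iff (hxc : x ≠ c) (hxd : x ≠ d) (hyc : y ≠ c) (hyd : y ≠ d) :
    (s.makeChain c d).Chained x y ↔ s.Chained x y := by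
  rw [makeChain, chained_set_iff (by omega) (by omega), chained_set_iff (by omega) (by omega)]

end Operations

section Abstraction

variable {x y p k : ℕ}

/-- The cell whose content the abstraction shows at position `x`; `none` stands for `initv`. -/
def source (s : IPState N) (x : ℕ) : Option ℕ :=
  match s.chainWith (x / 2) with
  | some k => if x / 2 < s.b then none else if x % 2 = 0 then some (2 * k + 1) else some x
  | none => if x / 2 < s.b then some x else none

theorem Zabs_eq_source (s : IPState N) (x : Fin N) :
    s.Zabs x = (s.source x).elim s.initv s.get := by
  rcases h : s.chainWith (x / 2) with _ | k <;> simp only [Zabs, source, h] <;> split_ifs <;>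
    simp [get]

theorem source_of_chained (h : s.Chained (x / 2) k) :
    s.source x = if x / 2 < s.b then none else if x % 2 = 0 then some (2 * k + 1) else some x := by
  rw [source, chainWith_eq_some_iff.mpr h]

theorem source_of_unchained (h : ∀ d, ¬ s.Chained (x / 2) d) :
    s.source x = if x / 2 < s.b then some x else none := by
  rw [source, chainWith_eq_none_iff.mpr h]

theorem source_congr (hb : x / 2 < t.b ↔ x / 2 < s.b)
    (hc : ∀ d, t.Chained (x / 2) d ↔ s.Chained (x / 2) d) : t.source x = s.source x := by
  simp only [source, chainWith_congr hc, hb]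

theorem Zabs_congr {x : Fin N} (hiv : t.initv = s.initv) (hsrc : t.source x = s.source x)
    (hget : ∀ p ∈ s.source x, t.get p = s.get p) : t.Zabs x = s.Zabs x := by
  rw [Zabs_eq_source, Zabs_eq_source, hsrc, hiv]
  cases h : s.source x with
  | none => rfl
  | some p => exact hget p h

theorem mem_source (hp : p ∈ s.source x) :
    (p / 2 = x / 2 ∨ s.Chained (x / 2) (p / 2)) ∧ (p / 2 < s.b ∨ p % 2 = 1) := by
  rcases h : s.chainWith (x / 2) with _ | k
  · simp only [source, h] at hp
    split_ifs at hp with hx <;> cases hp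
    omega
  · have hk := chainWith_eq_some_iff.mp h
    simp only [source, h] at hp
    split_ifs at hp with hx hx2 <;> cases hp
    · have := hk.lt_b_iff
      exact ⟨Or.inr (by rwa [show (2 * k + 1) / 2 = k by omega]), by omega⟩
    · omega

theorem source_injective (hx : p ∈ s.source x) (hy : p ∈ s.source y) : x = y := by
  rcases hcx : s.chainWith (x / 2) with _ | k <;> rcases hcy : s.chainWith (y / 2) with _ | l <;>
    simp only [source, hcx, hcy] at hx hy <;> split_ifs at hx hy <;>
    simp only [Option.mem_def, Option.some.injEq, reduceCtorEq] at hx hy <;>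
    simp only [chainWith_eq_some_iff, chainWith_eq_none_iff] at hcx hcy <;> try omega
  · exact absurd hcy.symm (by rw [show l = x / 2 by omega]; exact hcx _)
  · exact absurd hcx.symm (by rw [show k = y / 2 by omega]; exact hcy _)
  · obtain rfl : l = k := by omega
    have := hcx.symm.unique hcy.symm
    omega
  · have := hcx.lt_b_iff
    omega
  · have := hcy.lt_b_iff
    omega

theorem Zabs_congr_of_block {x : Fin N} (hiv : t.initv = s.initv)
    (hb : (x : ℕ) / 2 < t.b ↔ (x : ℕ) / 2 < s.b)
    (hc : ∀ d, t.Chained ((x : ℕ) / 2) d ↔ s.Chained ((x : ℕ) / 2) d)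
    (hget : ∀ q : ℕ, q / 2 = (x : ℕ) / 2 ∨ s.Chained ((x : ℕ) / 2) (q / 2) →
      q / 2 < s.b ∨ q % 2 = 1 → t.get q = s.get q) :
    t.Zabs x = s.Zabs x :=
  Zabs_congr hiv (source_congr hb hc) fun _ hp => hget _ (mem_source hp).1 (mem_source hp).2

theorem Zabs_of_written_unchained {x : Fin N} (hx : (x : ℕ) / 2 < s.b)
    (h : ∀ d, ¬ s.Chained ((x : ℕ) / 2) d) : s.Zabs x = s.get x := by
  rw [Zabs_eq_source, source_of_unchained h, if_pos hx]
  rfl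

theorem Zabs_of_written_chained {x : Fin N} (hx : (x : ℕ) / 2 < s.b)
    (h : s.Chained ((x : ℕ) / 2) k) : s.Zabs x = s.initv := by
  rw [Zabs_eq_source, source_of_chained h, if_pos hx]
  rfl

theorem Zabs_of_unwritten_unchained {x : Fin N} (hx : s.b ≤ (x : ℕ) / 2)
    (h : ∀ d, ¬ s.Chained ((x : ℕ) / 2) d) : s.Zabs x = s.initv := by
  rw [Zabs_eq_source, source_of_unchained h, if_neg (by omega)]
  rfl

theorem Zabs_of_unwritten_chained {x : Fin N} (hx : s.b ≤ (x : ℕ) / 2)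
    (h : s.Chained ((x : ℕ) / 2) k) :
    s.Zabs x = if (x : ℕ) % 2 = 0 then s.get (2 * k + 1) else s.get x := by
  rw [Zabs_eq_source, source_of_chained h, if_neg (by omega)]
  split_ifs <;> rfl

theorem Zabs_eq_update {i : Fin N} {v : ℕ} (hiv : t.initv = s.initv) (hsrc : t.source = s.source)
    (hi : p ∈ s.source i) (hp : t.get p = v)
    (hget : ∀ q ≠ p, q / 2 < s.b ∨ q % 2 = 1 → t.get q = s.get q) :
    t.Zabs = Function.update s.Zabs i v := by
  funext x
  rcases eq_or_ne x i with rfl | hxi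
  · rw [Function.update_self, Zabs_eq_source, hsrc, Option.mem_def.mp hi]
    exact hp
  · rw [Function.update_of_ne hxi]
    refine Zabs_congr hiv (congrFun hsrc x) fun q hq => hget q ?_ (mem_source hq).2
    rintro rfl
    exact hxi (Fin.ext (source_injective hq hi))

end Abstraction

section Steps

variable {i : Fin N} {k : ℕ}

theorem Zabs_wstep (v : ℕ) (hi : (i : ℕ) / 2 < s.b) :
    (s.wstep i v).Zabs = Function.update (s.breakChain ((i : ℕ) / 2)).Zabs i v := by
  set c := (i : ℕ) / 2
  have hchain : ∀ x d, (s.wstep i v).Chained x d ↔ (s.breakChain c).Chained x d := by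
    intro x d
    rw [wstep, chained_breakChain_iff, chained_breakChain_iff]
    constructor <;> rintro ⟨h, hx, hd⟩ <;> refine ⟨?_, hx, hd⟩
    · exact (chained_set_iff (by omega) (by omega)).mp h
    · exact (chained_set_iff (by omega) (by omega)).mpr h
  have hsrc : (s.wstep i v).source = (s.breakChain c).source :=
    funext fun x => source_congr (by simp [wstep]) (hchain _)
  refine Zabs_eq_update (p := (i : ℕ)) (by simp [wstep]) hsrc ?_ ?_ fun q hq hvis => ?_
  · rw [source_of_unchained fun d h => (chained_breakChain_iff.mp h).2.1 rfl, breakChain_b,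
      if_pos hi]
    rfl
  · rw [wstep, get_breakChain (by simpa) (Or.inl (by simpa)), get_set_self i.isLt]
  · rw [breakChain_b] at hvis
    rw [wstep, get_breakChain (by simpa) (by simpa using hvis), get_set_of_ne hq,
      get_breakChain hi hvis]

theorem Zabs_ustep (v : ℕ) (hk : s.Chained ((i : ℕ) / 2) k) (hi : s.b ≤ (i : ℕ) / 2) :
    (s.ustep i v k).Zabs = Function.update s.Zabs i v := by
  set w := if (i : ℕ) % 2 = 0 then 2 * k + 1 else (i : ℕ) with hw
  have hu : s.ustep i v k = s.set w v := by
    rw [ustep, hw]; split_ifs <;> rfl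
  have hw_odd : w % 2 = 1 := by rw [hw]; split_ifs <;> omega
  have hsrc : (s.set w v).source = s.source :=
    funext fun x => source_congr (by simp) fun d => chained_set_iff (by omega) (by omega)
  rw [hu]
  refine Zabs_eq_update rfl hsrc ?_ (get_set_self ?_) fun q hq _ => get_set_of_ne hq
  · rw [source_of_chained hk, if_neg (by omega), hw]
    split_ifs <;> rfl
  · have := hk.2.2.2.2
    rw [hw]; split_ifs <;> omega

end Steps

section Extend

variable {x y d k : ℕ}

theorem chained_bump_iff (hx : x ≠ s.b) (hd : d ≠ s.b) :
    ({ s with b := s.b + 1 } : IPState N).Chained x d ↔ s.Chained x d := by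
  unfold Chained get
  dsimp only
  constructor <;> rintro ⟨h1, h2, h3, h4⟩ <;> exact ⟨h1, h2, by omega, h4⟩

theorem extend_of_unchained (h : ∀ d, ¬ s.Chained s.b d) :
    s.extend = ((({ s with b := s.b + 1 } : IPState N).initBlock s.b).breakChain s.b, s.b) := by
  rw [extend, chainWith_eq_none_iff.mpr h]

theorem extend_of_chained (h : s.Chained s.b k) :
    s.extend = (((((({ s with b := s.b + 1 } : IPState N).set (2 * s.b)
      (s.get (2 * k + 1))).breakChain s.b).initBlock k).breakChain k), k) := by
  rw [extend, chainWith_eq_some_iff.mpr h]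
  rfl

@[simp] theorem extend_b : s.extend.1.b = s.b + 1 := by
  unfold extend; split <;> simp

@[simp] theorem extend_initv : s.extend.1.initv = s.initv := by
  unfold extend; split <;> simp

theorem extend_snd_spec :
    (s.extend.2 = s.b ∧ ∀ d, ¬ s.Chained s.b d) ∨ s.Chained s.b s.extend.2 := by
  by_cases h : ∃ k, s.Chained s.b k
  · obtain ⟨k, hk⟩ := h
    rw [extend_of_chained hk]
    exact Or.inr hk
  · push Not at h
    rw [extend_of_unchained h]
    exact Or.inl ⟨rfl, h⟩

theorem chained_extend_iff :
    s.extend.1.Chained x d ↔ s.Chained x d ∧ x ≠ s.b ∧ d ≠ s.b := by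
  by_cases h : ∃ k, s.Chained s.b k
  · obtain ⟨k, hk⟩ := h
    rw [extend_of_chained hk, chained_breakChain_iff]
    constructor
    · rintro ⟨hxd, hxk, hdk⟩
      obtain ⟨hxd, hxb, hdb⟩ :=
        chained_breakChain_iff.mp ((chained_initBlock_iff hxk hdk).mp hxd)
      exact ⟨(chained_bump_iff hxb hdb).mp ((chained_set_iff (by omega) (by omega)).mp hxd),
        hxb, hdb⟩
    · rintro ⟨hxd, hxb, hdb⟩
      have hxk : x ≠ k := by rintro rfl; exact hdb (hxd.unique hk.symm)
      have hdk : d ≠ k := by rintro rfl; exact hxb (hxd.symm.unique hk.symm)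
      refine ⟨(chained_initBlock_iff hxk hdk).mpr (chained_breakChain_iff.mpr ⟨?_, hxb, hdb⟩),
        hxk, hdk⟩
      exact (chained_set_iff (by omega) (by omega)).mpr ((chained_bump_iff hxb hdb).mpr hxd)
  · push Not at h
    rw [extend_of_unchained h, chained_breakChain_iff]
    constructor
    · rintro ⟨hxd, hxb, hdb⟩
      exact ⟨(chained_bump_iff hxb hdb).mp ((chained_initBlock_iff hxb hdb).mp hxd), hxb, hdb⟩
    · rintro ⟨hxd, hxb, hdb⟩
      exact ⟨(chained_initBlock_iff hxb hdb).mpr ((chained_bump_iff hxb hdb).mpr hxd), hxb, hdb⟩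

theorem extend_snd_le : s.extend.2 ≤ s.b := by
  rcases extend_snd_spec (s := s) with ⟨h, -⟩ | h
  · exact h.le
  · have := h.lt_b_iff
    omega

theorem extend_snd_unchained : ∀ d, ¬ s.extend.1.Chained s.extend.2 d := by
  intro d hd
  obtain ⟨hd, hjb, hdb⟩ := chained_extend_iff.mp hd
  rcases extend_snd_spec (s := s) with ⟨h, -⟩ | h
  · exact hjb h
  · exact hdb (hd.unique h.symm)

theorem get_extend (hy : y / 2 ≠ s.b) (hj : y / 2 ≠ s.extend.2)
    (hvis : y / 2 < s.b ∨ y % 2 = 1) : s.extend.1.get y = s.get y := by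
  by_cases h : ∃ k, s.Chained s.b k
  · obtain ⟨k, hk⟩ := h
    have hkb := hk.lt_b_iff
    rw [extend_of_chained hk] at hj ⊢
    rw [get_breakChain (by simp; omega) (by simp; omega), get_initBlock_of_ne hj,
      get_breakChain (by simp) (by simp; omega), get_set_of_ne (by omega)]
    rfl
  · push Not at h
    rw [extend_of_unchained h]
    rw [get_breakChain (by simp) (by simp; omega), get_initBlock_of_ne hy]
    rfl

theorem get_extend_of_snd (hroom : 2 * s.b + 2 ≤ N) (hy : y / 2 = s.extend.2) :
    s.extend.1.get y = s.initv := by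
  by_cases h : ∃ k, s.Chained s.b k
  · obtain ⟨k, hk⟩ := h
    have hkb := hk.lt_b_iff
    have hkN := hk.2.2.2.2
    rw [extend_of_chained hk] at hy ⊢
    rw [get_breakChain (by simp; omega) (by simp; omega), get_initBlock hkN hy]
    simp
  · push Not at h
    rw [extend_of_unchained h] at hy ⊢
    rw [get_breakChain (by simp) (by simp; omega), get_initBlock (by omega) hy]

theorem get_extend_of_chained (hk : s.Chained s.b k) (hy : y / 2 = s.b) :
    s.extend.1.get y = if y % 2 = 0 then s.get (2 * k + 1) else s.get y := by
  have hkb := hk.lt_b_iff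
  have hN := hk.2.2.2.1
  rw [extend_of_chained hk]
  rw [get_breakChain (by simp; omega) (by simp; omega), get_initBlock_of_ne (by omega),
    get_breakChain (by simp) (by simp; omega)]
  split_ifs
  · rw [show y = 2 * s.b by omega, get_set_self (by omega)]
  · rw [get_set_of_ne (by omega)]
    rfl

theorem Zabs_extend (hroom : 2 * s.b + 2 ≤ N) : s.extend.1.Zabs = s.Zabs := by
  funext x
  have hjb := extend_snd_le (s := s)
  by_cases hxj : (x : ℕ) / 2 = s.extend.2
  · rw [Zabs_of_written_unchained (by simp; omega) (hxj ▸ extend_snd_unchained),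
      get_extend_of_snd hroom hxj]
    rcases extend_snd_spec (s := s) with ⟨h, hu⟩ | h
    · rw [Zabs_of_unwritten_unchained (by omega) (by rw [hxj, h]; exact hu)]
    · rw [Zabs_of_written_chained (by have := h.lt_b_iff; omega) (hxj ▸ h.symm)]
  by_cases hxb : (x : ℕ) / 2 = s.b
  · obtain ⟨k, hk⟩ : ∃ k, s.Chained s.b k := by
      rcases extend_snd_spec (s := s) with ⟨h, -⟩ | h
      · omega
      · exact ⟨_, h⟩
    rw [Zabs_of_written_unchained (by simp; omega) fun d hd => (chained_extend_iff.mp hd).2.1 hxb,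
      Zabs_of_unwritten_chained hxb.ge (hxb ▸ hk), get_extend_of_chained hk hxb]
  have hpartner : ∀ d, s.Chained ((x : ℕ) / 2) d → d ≠ s.b ∧ d ≠ s.extend.2 := by
    intro d hd
    rcases extend_snd_spec (s := s) with ⟨h, hu⟩ | h
    · have hdb : d ≠ s.b := by rintro rfl; exact hu _ hd.symm
      exact ⟨hdb, h ▸ hdb⟩
    · exact ⟨by rintro rfl; exact hxj (hd.symm.unique h),
        by rintro rfl; exact hxb (hd.symm.unique h.symm)⟩
  refine Zabs_congr_of_block (by simp) (by simp; omega) (fun d => ?_)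
    fun q hq hvis => get_extend ?_ ?_ hvis
  · rw [chained_extend_iff]
    exact ⟨fun h => h.1, fun h => ⟨h, hxb, (hpartner d h).1⟩⟩
  · rcases hq with hq | hq
    · omega
    · exact (hpartner _ hq).1
  · rcases hq with hq | hq
    · omega
    · exact (hpartner _ hq).2

end Extend

section FreshBlock

structure IsFresh (s : IPState N) (j : ℕ) : Prop where
  lt_b : j < s.b
  unchained : ∀ d, ¬ s.Chained j d
  get_eq : ∀ y, y / 2 = j → s.get y = s.initv
  lt_N : 2 * j + 1 < N

theorem isFresh_extend (hroom : 2 * s.b + 2 ≤ N) : s.extend.1.IsFresh s.extend.2 := by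
  have := extend_snd_le (s := s)
  exact ⟨by simp; omega, extend_snd_unchained,
    fun _ hy => by rw [get_extend_of_snd hroom hy, extend_initv], by omega⟩

variable {j c k : ℕ}

theorem Zabs_makeChain_initBlock (hfresh : s.IsFresh j) (hc : s.b ≤ c)
    (hcu : ∀ d, ¬ s.Chained c d) (hcN : 2 * c + 1 < N) :
    ((s.initBlock c).makeChain j c).Zabs = s.Zabs := by
  obtain ⟨hj, hju, hjv, hjN⟩ := hfresh
  set u := (s.initBlock c).makeChain j c
  have hjc : u.Chained j c := chained_makeChain hj hc hjN hcN
  have hget : ∀ y, y / 2 ≠ c → y ≠ 2 * j → u.get y = s.get y := fun y hyc hyj =>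
    (get_makeChain_of_ne hyj (by omega)).trans (get_initBlock_of_ne hyc)
  funext x
  by_cases hxj : (x : ℕ) / 2 = j
  · rw [Zabs_of_written_chained (by simpa [hxj]) (hxj ▸ hjc),
      Zabs_of_written_unchained (by omega) (hxj ▸ hju), hjv x hxj]
    rfl
  by_cases hxc : (x : ℕ) / 2 = c
  · rw [Zabs_of_unwritten_chained (by simpa [hxc]) (hxc ▸ hjc.symm),
      Zabs_of_unwritten_unchained (by omega) (hxc ▸ hcu)]
    split_ifs
    · rw [hget _ (by omega) (by omega), hjv _ (by omega)]
    · rw [get_makeChain_of_ne (by omega) (by omega), get_initBlock hcN hxc]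
  refine Zabs_congr_of_block rfl Iff.rfl (fun d => ?_) fun q hq _ => hget q ?_ ?_
  · rcases eq_or_ne d j with rfl | hdj
    · exact iff_of_false (fun h => hxc (h.symm.unique hjc)) (fun h => hju _ h.symm)
    rcases eq_or_ne d c with rfl | hdc
    · exact iff_of_false (fun h => hxj (h.symm.unique hjc.symm)) (fun h => hcu _ h.symm)
    exact (chained_makeChain_iff hxj hxc hdj hdc).trans (chained_initBlock_iff hxc hdc)
  · rcases hq with hq | hq
    · omega
    · exact fun h => hcu _ (h ▸ hq.symm)
  · rcases hq with hq | hq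
    · omega
    · exact fun h => hju _ (show q / 2 = j by omega ▸ hq.symm)

theorem Zabs_moveChain (hfresh : s.IsFresh j) (hjc : j ≠ c) (hc : c < s.b)
    (hck : s.Chained c k) :
    (((((s.set (2 * j) (s.get (2 * c))).set (2 * j + 1) (s.get (2 * c + 1))).makeChain j
      k).initBlock c).breakChain c).Zabs = s.Zabs := by
  obtain ⟨hj, hju, hjv, hjN⟩ := hfresh
  have hk := hck.lt_b_iff.mp hc
  have hkN := hck.2.2.2.2
  have hcN := hck.2.2.2.1
  set u1 := ((s.set (2 * j) (s.get (2 * c))).set (2 * j + 1) (s.get (2 * c + 1))).makeChain j k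
  set u := (u1.initBlock c).breakChain c
  have hub : u.b = s.b := by simp [u, u1]
  have huiv : u.initv = s.initv := by simp [u, u1]
  have hjk : u.Chained j k := chained_breakChain_iff.mpr
    ⟨(chained_initBlock_iff hjc (by omega)).mpr
      (chained_makeChain (by simpa using hj) (by simpa using hk) hjN hkN), hjc, by omega⟩
  have hcu : ∀ d, ¬ u.Chained c d := fun d h => (chained_breakChain_iff.mp h).2.1 rfl
  have hchain : ∀ x d, x ≠ c → x ≠ j → x ≠ k → d ≠ c → d ≠ j → d ≠ k →
      (u.Chained x d ↔ s.Chained x d) := fun x d hxc hxj hxk hdc hdj hdk => by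
    rw [chained_breakChain_iff, chained_initBlock_iff hxc hdc,
      chained_makeChain_iff hxj hxk hdj hdk, chained_set_iff (by omega) (by omega),
      chained_set_iff (by omega) (by omega)]
    exact ⟨fun h => h.1, fun h => ⟨h, hxc, hdc⟩⟩
  have hget : ∀ y, y / 2 < s.b ∨ y % 2 = 1 → y / 2 ≠ c → y / 2 ≠ j →
      u.get y = s.get y := fun y hvis hyc hyj => by
    rw [get_breakChain (by simp [u1]; omega) (by simp [u1]; omega), get_initBlock_of_ne hyc,
      get_makeChain_of_ne (by omega) (by omega), get_set_of_ne (by omega),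
      get_set_of_ne (by omega)]
  funext x
  by_cases hxc : (x : ℕ) / 2 = c
  · rw [Zabs_of_written_unchained (by rw [hub]; omega) (hxc ▸ hcu),
      Zabs_of_written_chained (by omega) (hxc ▸ hck),
      get_breakChain (by simp [u1]; omega) (by simp [u1]; omega), get_initBlock hcN hxc]
    simp [u1]
  by_cases hxj : (x : ℕ) / 2 = j
  · rw [Zabs_of_written_chained (by rw [hub]; omega) (hxj ▸ hjk),
      Zabs_of_written_unchained (by omega) (hxj ▸ hju), hjv x hxj, huiv]
  by_cases hxk : (x : ℕ) / 2 = k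
  · rw [Zabs_of_unwritten_chained (by rw [hub]; omega) (hxk ▸ hjk.symm),
      Zabs_of_unwritten_chained (by omega) (hxk ▸ hck.symm)]
    split_ifs
    · rw [get_breakChain (by simp [u1]; omega) (Or.inr (by omega)),
        get_initBlock_of_ne (by omega), get_makeChain_of_ne (by omega) (by omega),
        get_set_self hjN]
    · exact hget x (by omega) (by omega) (by omega)
  have hpartner : ∀ d, s.Chained ((x : ℕ) / 2) d → d ≠ c ∧ d ≠ j ∧ d ≠ k :=
    fun d hd => ⟨by rintro rfl; exact hxk (hd.symm.unique hck),
      by rintro rfl; exact hju _ hd.symm,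
      by rintro rfl; exact hxc (hd.symm.unique hck.symm)⟩
  refine Zabs_congr_of_block huiv (by rw [hub]) (fun d => ?_) fun q hq hvis => ?_
  · by_cases hd : d = c ∨ d = j ∨ d = k
    · refine iff_of_false (fun h => ?_) (fun h => ?_)
      · rcases hd with rfl | rfl | rfl
        · exact hcu _ h.symm
        · exact hxk (h.symm.unique hjk)
        · exact hxj (h.symm.unique hjk.symm)
      · obtain ⟨h1, h2, h3⟩ := hpartner d h
        omega
    · push Not at hd
      exact hchain _ _ hxc hxj hxk hd.1 hd.2.1 hd.2.2
  · rcases hq with hq | hq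
    · exact hget q hvis (by omega) (by omega)
    · obtain ⟨h1, h2, -⟩ := hpartner _ hq
      exact hget q hvis h1 h2

end FreshBlock

section Write

variable {i : Fin N} (v : ℕ)

theorem Zabs_wstep_extend (hroom : 2 * s.b + 2 ≤ N) (hi : s.extend.2 = (i : ℕ) / 2) :
    (s.extend.1.wstep i v).Zabs = Function.update s.Zabs i v := by
  have hfresh := isFresh_extend hroom
  rw [Zabs_wstep v (hi ▸ hfresh.lt_b), breakChain_of_unchained (hi ▸ hfresh.unchained),
    Zabs_extend hroom]

theorem Zabs_iwrite_of_written (hi : (i : ℕ) / 2 < s.b) :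
    (s.iwrite i v).Zabs = Function.update s.Zabs i v := by
  rcases h : s.chainWith ((i : ℕ) / 2) with _ | k
  · simp only [iwrite, if_pos hi, h]
    rw [Zabs_wstep v hi, breakChain_of_unchained (chainWith_eq_none_iff.mp h)]
  have hk := chainWith_eq_some_iff.mp h
  have hroom : 2 * s.b + 2 ≤ N := by have := hk.lt_b_iff.mp hi; have := hk.2.2.2.2; omega
  by_cases hj : s.extend.2 = (i : ℕ) / 2
  · simp only [iwrite, if_pos hi, h, if_pos hj]
    exact Zabs_wstep_extend v hroom hj
  simp only [iwrite, if_pos hi, h, if_neg hj]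
  have hkb : k ≠ s.b := by
    rintro rfl
    rcases extend_snd_spec (s := s) with ⟨-, hu⟩ | hb
    · exact hu _ hk.symm
    · exact hj (hb.unique hk.symm)
  rw [Zabs_wstep v (by simp; omega), Zabs_moveChain (isFresh_extend hroom) hj (by simp; omega)
    (chained_extend_iff.mpr ⟨hk, by omega, hkb⟩), Zabs_extend hroom]

theorem Zabs_iwrite_of_unwritten (hN : N % 2 = 0) (hi : s.b ≤ (i : ℕ) / 2) :
    (s.iwrite i v).Zabs = Function.update s.Zabs i v := by
  rcases h : s.chainWith ((i : ℕ) / 2) with _ | k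
  swap
  · simp only [iwrite, if_neg (not_lt.mpr hi), h]
    exact Zabs_ustep v (chainWith_eq_some_iff.mp h) hi
  have hu := chainWith_eq_none_iff.mp h
  have hroom : 2 * s.b + 2 ≤ N := by have := i.isLt; omega
  by_cases hj : s.extend.2 = (i : ℕ) / 2
  · simp only [iwrite, if_neg (not_lt.mpr hi), h, if_pos hj]
    exact Zabs_wstep_extend v hroom hj
  simp only [iwrite, if_neg (not_lt.mpr hi), h, if_neg hj]
  have hfresh := isFresh_extend hroom
  have hib : (i : ℕ) / 2 ≠ s.b := by
    rintro hb
    rcases extend_snd_spec (s := s) with ⟨hb', -⟩ | hb'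
    · exact hj (hb'.trans hb.symm)
    · exact hu _ (hb ▸ hb')
  have hiN : 2 * ((i : ℕ) / 2) + 1 < N := by have := i.isLt; omega
  have htu : ∀ d, ¬ s.extend.1.Chained ((i : ℕ) / 2) d := fun d hd =>
    hu d (chained_extend_iff.mp hd).1
  have hchain : ((s.extend.1.initBlock ((i : ℕ) / 2)).makeChain s.extend.2
      ((i : ℕ) / 2)).Chained ((i : ℕ) / 2) s.extend.2 :=
    (chained_makeChain (by simpa using hfresh.lt_b) (by simp; omega) hfresh.lt_N hiN).symm
  rw [Zabs_ustep v hchain (by simp; omega),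
    Zabs_makeChain_initBlock hfresh (by simp; omega) htu hiN, Zabs_extend hroom]

theorem Zabs_iwrite (hN : N % 2 = 0) : (s.iwrite i v).Zabs = Function.update s.Zabs i v := by
  rcases lt_or_ge ((i : ℕ) / 2) s.b with hi | hi
  · exact Zabs_iwrite_of_written v hi
  · exact Zabs_iwrite_of_unwritten v hN hi

end Write

namespace WF

variable {ℓ c d x v : ℕ}

theorem get_lt (hs : s.WF ℓ) (y : ℕ) : s.get y < 2 ^ ℓ := by
  unfold get
  split
  · exact hs.1 _
  · exact Nat.two_pow_pos ℓ

theorem set (hs : s.WF ℓ) (hv : v < 2 ^ ℓ) : (s.set x v).WF ℓ := by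
  refine ⟨fun y => ?_, hs.2.1, hs.2.2⟩
  simp only [IPState.set]
  split_ifs
  · exact hv
  · exact hs.1 y

theorem breakChain (hs : s.WF ℓ) (hN : N ≤ 2 ^ ℓ) : (s.breakChain c).WF ℓ := by
  by_cases h : ∃ d, s.Chained c d
  · obtain ⟨d, hd⟩ := h
    rw [breakChain_of_chained hd]
    exact hs.set (by have := hd.2.2.2.2; omega)
  · push Not at h
    rwa [breakChain_of_unchained h]

theorem initBlock (hs : s.WF ℓ) : (s.initBlock c).WF ℓ :=
  (hs.set hs.2.1).set hs.2.1

theorem makeChain (hs : s.WF ℓ) (hc : 2 * c < 2 ^ ℓ) (hd : 2 * d < 2 ^ ℓ) :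
    (s.makeChain c d).WF ℓ :=
  (hs.set hd).set hc

theorem wstep (hs : s.WF ℓ) (hN : N ≤ 2 ^ ℓ) {i : Fin N} (hv : v < 2 ^ ℓ) :
    (s.wstep i v).WF ℓ :=
  (hs.set hv).breakChain hN

theorem ustep (hs : s.WF ℓ) {i : Fin N} {k : ℕ} (hv : v < 2 ^ ℓ) :
    (s.ustep i v k).WF ℓ := by
  unfold IPState.ustep
  split_ifs <;> exact hs.set hv

theorem extend (hs : s.WF ℓ) (hN : N ≤ 2 ^ ℓ) (hroom : 2 * s.b + 2 ≤ N) :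
    s.extend.1.WF ℓ := by
  have hbump : ({ s with b := s.b + 1 } : IPState N).WF ℓ := ⟨hs.1, hs.2.1, by simp; omega⟩
  unfold IPState.extend
  split
  · exact hbump.initBlock.breakChain hN
  · exact ((hbump.set (hbump.get_lt _)).breakChain hN).initBlock.breakChain hN

theorem iwrite (hs : s.WF ℓ) (hN : N ≤ 2 ^ ℓ) (hNeven : N % 2 = 0) (i : Fin N)
    (hv : v < 2 ^ ℓ) : (s.iwrite i v).WF ℓ := by
  have hiN : 2 * ((i : ℕ) / 2) + 1 < N := by have := i.isLt; omega
  by_cases hi : (i : ℕ) / 2 < s.b <;> rcases h : s.chainWith ((i : ℕ) / 2) with _ | k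
  · simp only [IPState.iwrite, if_pos hi, h]
    exact hs.wstep hN hv
  · have hk := chainWith_eq_some_iff.mp h
    have hroom : 2 * s.b + 2 ≤ N := by have := hk.lt_b_iff.mp hi; have := hk.2.2.2.2; omega
    have ht := hs.extend hN hroom
    have := (isFresh_extend hroom).lt_N
    simp only [IPState.iwrite, if_pos hi, h]
    split_ifs
    · exact ht.wstep hN hv
    · exact (((ht.set (ht.get_lt _)).set (ht.get_lt _)).makeChain (by omega)
        (by have := hk.2.2.2.2; omega)).initBlock.wstep hN hv
  · have hroom : 2 * s.b + 2 ≤ N := by omega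
    have ht := hs.extend hN hroom
    have := (isFresh_extend hroom).lt_N
    simp only [IPState.iwrite, if_neg hi, h]
    split_ifs
    · exact ht.wstep hN hv
    · exact (ht.initBlock.makeChain (by omega) (by omega)).ustep hv
  · simp only [IPState.iwrite, if_neg hi, h]
    exact hs.ustep hv

end WF

end IPState

theorem inplace_iwrite_correct_general (N ℓ : ℕ) (hNeven : N % 2 = 0)
    (hℓ : Nat.clog 2 N ≤ ℓ) (s : IPState N) (hs : s.WF ℓ)
    (i : Fin N) (v : ℕ) (hv : v < 2 ^ ℓ) :
    (s.iwrite i v).WF ℓ ∧ (s.iwrite i v).Zabs = Function.update s.Zabs i v := by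
  have hN : N ≤ 2 ^ ℓ := (Nat.clog_le_iff_le_pow Nat.one_lt_two).mp hℓ
  exact ⟨hs.iwrite hN hNeven i hv, IPState.Zabs_iwrite v hNeven⟩

/-- Invariant maintenance for the in-place algorithm using `2ℓ` extra bits: for every
well-formed state, the write operation of Algorithm 3 yields a well-formed state and
implements writing one element of the abstract array. -/
theorem inplace_iwrite_correct (N ℓ : ℕ) (hNeven : N % 2 = 0) (hN : 2 ≤ N)
    (hℓ : Nat.clog 2 N ≤ ℓ) (s : IPState N) (hs : s.WF ℓ)
    (i : Fin N) (v : ℕ) (hv : v < 2 ^ ℓ) :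
    (s.iwrite i v).WF ℓ ∧ (s.iwrite i v).Zabs = Function.update s.Zabs i v :=
  inplace_iwrite_correct_general N ℓ hNeven hℓ s hs i v hv
end

section
/- For every well-formed in-place state s (N even, N ≥ 2, ℓ ≥ Nat.clog 2 N, all entries of A and initv strictly less than 2^ℓ, 2·b ≤ N) and every position i : Fin N, the read operation of Algorithm 2 returns Zabs s i; that is, iread(s, i) = Zabs s i. -/
/-- The read operation of the in-place algorithm (Algorithm 2) returns the abstract
array contents: for every well-formed state `s` and position `i`,
`iread s i = Zabs s i`. -/
theorem inplace_iread_correct (N ℓ : ℕ) (hNeven : N % 2 = 0) (hN : 2 ≤ N)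
    (hℓ : Nat.clog 2 N ≤ ℓ) (s : IPState N) (hs : s.WF ℓ) (i : Fin N) :
    s.iread i = s.Zabs i := by
  have hdiv : ((i : ℕ) < 2 * s.b) ↔ ((i : ℕ) / 2 < s.b) := by
    rw [Nat.div_lt_iff_lt_mul (by norm_num)]
    omega
  unfold IPState.iread IPState.Zabs
  cases hc : s.chainWith ((i : ℕ) / 2) with
  | none =>
    simp only [hc]
    by_cases h : (i : ℕ) < 2 * s.b
    · rw [if_pos h, if_pos (hdiv.mp h)]
    · rw [if_neg h, if_neg (fun hh => h (hdiv.mpr hh))]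
  | some k =>
    simp only [hc]
    by_cases h : (i : ℕ) < 2 * s.b
    · rw [if_pos h, if_pos (hdiv.mp h)]
    · rw [if_neg h, if_neg (fun hh => h (hdiv.mpr hh))]
      by_cases hpar : (i : ℕ) % 2 = 0
      · rw [if_pos hpar, if_pos hpar]
        -- extract facts from hc
        unfold IPState.chainWith at hc
        simp only at hc
        split at hc
        · rename_i hcond
          injection hc with hk
          have heq : 2 * ((i : ℕ) / 2) = (i : ℕ) := by omega
          have hAi : s.A i = s.get (2 * ((i : ℕ) / 2)) := by
            unfold IPState.get
            rw [heq, dif_pos i.isLt]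
          rw [hAi, ← hk]
          congr 1
          omega
        · exact absurd hc (by simp)
      · rw [if_neg hpar, if_neg hpar]
end

section
/- For every in-place state whose stack pointer b equals 0 and whose initial value is v, the abstraction Zabs is the constant function v; consequently the operation iinit(s, v), which sets b ← 0 and initv ← v while leaving A unchanged, satisfies Zabs(iinit(s, v)) = (fun _ => v). (In words: setting the stack pointer to zero breaks all chains and initializes the whole abstract array in constant time.) -/
/-- When the stack pointer is zero, all chains are broken and the abstract array is
constantly equal to the initial value; consequently the constant-time init operation
`iinit`, which sets `b ← 0` and `initv ← v`, initializes the whole abstract array. -/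
theorem inplace_iinit_correct (N : ℕ) (hNeven : N % 2 = 0) (hN : 2 ≤ N)
    (s : IPState N) (v : ℕ) :
    (s.b = 0 → s.initv = v → s.Zabs = fun _ => v) ∧
      (s.iinit v).Zabs = fun _ => v := by
  have key : ∀ (t : IPState N), t.b = 0 → t.Zabs = fun _ => t.initv := by
    intro t hb
    funext x
    have hc : t.chainWith ((x : ℕ) / 2) = none := by
      unfold IPState.chainWith
      simp only [hb]
      rw [if_neg]
      rintro ⟨-, -, h, -⟩
      omega
    simp [IPState.Zabs, hc, hb]
  constructor
  · intro hb hv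
    rw [key s hb, hv]
  · rw [key (s.iinit v) rfl]
    rfl
end
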